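/- arXiv:2510.27110 — 3 statements merged into one kernel-verified Lean document; each statement's English description precedes it below -/
import Mathlib

section
/- Let ω_0, …, ω_{P−1} ∈ ℝ, T_S > 0, fix p ∈ {0, …, P−1}, and write Ω_C = {ω_0, …, ω_{P−1}} and Ω_C^{[p]} = Ω_C \ {ω_p}. For any sequence a : ℤ → ℂ define ã[k] = a[k]·exp(−i ω_p k T_S). Then for every integer N ≥ 1 and every k ∈ ℤ, (Ψ_{Ω_C}^N ∗ ã)[k] = (Ψ_{Ω_C^{[p]}}^N ∗ b)[k], where b[m] = (Δ^N ∗ a)[m]·exp(−i ω_p m T_S). (The commutation identity proved by induction in the paper's supplementary material.) -/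
noncomputable section

open scoped BigOperators

/-- Kronecker delta sequence. -/
def delta : ℤ → ℂ := fun k => if k = 0 then 1 else 0

/-- Discrete convolution of sequences: `(a ∗ b)[k] = ∑ₙ a[n]·b[k−n]`. -/
def conv (a b : ℤ → ℂ) : ℤ → ℂ := fun k => ∑' n : ℤ, a n * b (k - n)

/-- `N`-fold convolution power (`convPow a 0` is the unit `delta`). -/
def convPow (a : ℤ → ℂ) : ℕ → ℤ → ℂ
  | 0 => delta
  | n + 1 => conv a (convPow a n)

/-- Two-tap modulated filter `ψ = [-1, exp(-i ω T)]`. -/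
def psi (w T : ℝ) : ℤ → ℂ := fun k =>
  if k = 0 then -1 else if k = 1 then Complex.exp (-(Complex.I * (w : ℂ) * (T : ℂ))) else 0

/-- Multiband filter `Ψ = ψ₀ ∗ ψ₁ ∗ ⋯` over a list of frequencies. -/
def PsiL (ws : List ℝ) (T : ℝ) : ℤ → ℂ :=
  (ws.map fun w => psi w T).foldr conv delta

/-- First difference filter `Δ = [-1, 1]`. -/
def Delta : ℤ → ℂ := fun k => if k = 0 then -1 else if k = 1 then 1 else 0

/-- Fourier transform in angular frequency: `f̂(ω) = ∫ exp(-i ω t) f(t) dt`. -/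
def angFourier (f : ℝ → ℂ) (w : ℝ) : ℂ :=
  ∫ t : ℝ, Complex.exp (-(Complex.I * (w : ℂ) * (t : ℂ))) * f t

/-- Centered modulo `M_λ : ℝ → [-λ, λ)`. -/
def mod1 (lam t : ℝ) : ℝ := t - 2 * lam * (⌊(t + lam) / (2 * lam)⌋ : ℝ)

/-- Centered modulo on ℂ, applied componentwise. -/
def cmod (lam : ℝ) (z : ℂ) : ℂ := (mod1 lam z.re : ℂ) + (mod1 lam z.im : ℂ) * Complex.I

/-- Elementary symmetric polynomial of degree `k` in variables `z 0, …, z (P-1)`. -/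
def esymmC {P : ℕ} (z : Fin P → ℂ) (k : ℕ) : ℂ :=
  ∑ S ∈ Finset.univ.powersetCard k, ∏ i ∈ S, z i

open scoped Pointwise

/-- finitely supported -/
def FS (f : ℤ → ℂ) : Prop := ∃ s : Finset ℤ, ∀ k ∉ s, f k = 0

theorem conv_comm (f g : ℤ → ℂ) : conv f g = conv g f := by
  funext k
  unfold conv
  rw [← (Equiv.subLeft k).tsum_eq (fun n => f n * g (k - n))]
  apply tsum_congr; intro n
  simp [Equiv.subLeft, mul_comm]

theorem conv_eq_sum {f : ℤ → ℂ} {s : Finset ℤ} (hs : ∀ k ∉ s, f k = 0)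
    (a : ℤ → ℂ) (k : ℤ) : conv f a k = ∑ n ∈ s, f n * a (k - n) := by
  apply tsum_eq_sum
  intro b hb
  rw [hs b hb, zero_mul]

theorem conv_support {f g : ℤ → ℂ} {s t : Finset ℤ}
    (hf : ∀ k ∉ s, f k = 0) (hg : ∀ k ∉ t, g k = 0) :
    ∀ k ∉ s + t, conv f g k = 0 := by
  intro k hk
  have h : ∀ n : ℤ, f n * g (k - n) = 0 := by
    intro n
    by_cases hn : n ∈ s
    · have hkn : k - n ∉ t := by
        intro hmem
        have h2 := Finset.add_mem_add hn hmem
        rw [add_sub_cancel] at h2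
        exact hk h2
      rw [hg _ hkn, mul_zero]
    · rw [hf n hn, zero_mul]
  unfold conv
  calc ∑' n : ℤ, f n * g (k - n) = ∑' _ : ℤ, (0:ℂ) := tsum_congr h
  _ = 0 := tsum_zero

theorem FS_conv {f g : ℤ → ℂ} (hf : FS f) (hg : FS g) : FS (conv f g) := by
  obtain ⟨s, hs⟩ := hf; obtain ⟨t, ht⟩ := hg
  exact ⟨s + t, conv_support hs ht⟩

theorem FS_delta : FS delta := ⟨{0}, by intro k hk; simp [delta]; intro h; exact absurd (by simp [h]) hk⟩

theorem FS_psi (w T : ℝ) : FS (psi w T) := by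
  refine ⟨{0, 1}, ?_⟩
  intro k hk
  simp only [Finset.mem_insert, Finset.mem_singleton, not_or] at hk
  simp [psi, hk.1, hk.2]

theorem FS_Delta : FS Delta := by
  refine ⟨{0, 1}, ?_⟩
  intro k hk
  simp only [Finset.mem_insert, Finset.mem_singleton, not_or] at hk
  simp [Delta, hk.1, hk.2]

theorem conv_assoc {f g : ℤ → ℂ} (hf : FS f) (hg : FS g) (a : ℤ → ℂ) :
    conv (conv f g) a = conv f (conv g a) := by
  obtain ⟨s, hs⟩ := hf; obtain ⟨t, ht⟩ := hg
  funext k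
  rw [conv_eq_sum (conv_support hs ht) a k, conv_eq_sum hs (conv g a) k]
  simp_rw [conv_eq_sum ht a, conv_eq_sum hs]
  simp_rw [Finset.sum_mul]
  rw [Finset.sum_comm]
  apply Finset.sum_congr rfl
  intro n hn
  rw [Finset.mul_sum]
  have hsub : t.map (addLeftEmbedding n) ⊆ s + t := by
    intro x hx
    rw [Finset.mem_map] at hx
    obtain ⟨j, hj, rfl⟩ := hx
    exact Finset.add_mem_add hn hj
  have hzero : ∀ x ∈ s + t, x ∉ t.map (addLeftEmbedding n) →
      f n * g (x - n) * a (k - x) = 0 := by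
    intro x _ hx
    have : x - n ∉ t := by
      intro hmem
      apply hx
      rw [Finset.mem_map]
      exact ⟨x - n, hmem, by simp [addLeftEmbedding_apply]⟩
    rw [ht _ this, mul_zero, zero_mul]
  rw [← Finset.sum_subset hsub hzero, Finset.sum_map]
  apply Finset.sum_congr rfl
  intro j hj
  have h1 : n + j - n = j := by ring
  have h2 : k - (n + j) = k - n - j := by ring
  rw [addLeftEmbedding_apply, h1, h2, mul_assoc]

theorem conv_delta (a : ℤ → ℂ) : conv delta a = a := by
  funext k
  unfold conv
  rw [tsum_eq_single 0 (by intro b hb; simp [delta, hb])]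
  simp [delta]

theorem conv_delta' (a : ℤ → ℂ) : conv a delta = a := by rw [conv_comm, conv_delta]

theorem conv_left_comm {f g : ℤ → ℂ} (hf : FS f) (hg : FS g) (a : ℤ → ℂ) :
    conv f (conv g a) = conv g (conv f a) := by
  rw [← conv_assoc hf hg, conv_comm f g, conv_assoc hg hf]

theorem FS_convPow {f : ℤ → ℂ} (hf : FS f) (N : ℕ) : FS (convPow f N) := by
  induction N with
  | zero => exact FS_delta
  | succ n ih => exact FS_conv hf ih

theorem FS_PsiL (ws : List ℝ) (T : ℝ) : FS (PsiL ws T) := by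
  induction ws with
  | nil => exact FS_delta
  | cons w l ih => exact FS_conv (FS_psi w T) ih

theorem PsiL_cons (w : ℝ) (l : List ℝ) (T : ℝ) :
    PsiL (w :: l) T = conv (psi w T) (PsiL l T) := rfl

theorem PsiL_extract (T : ℝ) : ∀ (l : List ℝ) (p : ℕ) (hp : p < l.length),
    PsiL l T = conv (psi l[p] T) (PsiL (l.eraseIdx p) T) := by
  intro l
  induction l with
  | nil => intro p hp; simp at hp
  | cons x xs ih =>
    intro p hp
    cases p with
    | zero => simp [PsiL_cons]
    | succ q =>
      have hq : q < xs.length := by simpa using hp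
      have : (x :: xs).eraseIdx (q + 1) = x :: xs.eraseIdx q := rfl
      rw [this, PsiL_cons, PsiL_cons, ih q hq,
        conv_left_comm (FS_psi x T) (FS_psi _ T)]
      rfl

theorem convPow_conv {f g : ℤ → ℂ} (hf : FS f) (hg : FS g) (N : ℕ) :
    convPow (conv f g) N = conv (convPow f N) (convPow g N) := by
  induction N with
  | zero => show delta = conv delta delta; rw [conv_delta]
  | succ n ih =>
    show conv (conv f g) (convPow (conv f g) n)
      = conv (conv f (convPow f n)) (conv g (convPow g n))
    rw [ih, conv_assoc hf hg, conv_assoc hf (FS_convPow hf n),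
      conv_left_comm hg (FS_convPow hf n)]

/-- modulation character -/
def Em (w T : ℝ) (m : ℤ) : ℂ := Complex.exp (-(Complex.I * (w : ℂ) * (m : ℂ) * (T : ℂ)))

theorem Em_add (w T : ℝ) (m n : ℤ) : Em w T (m + n) = Em w T m * Em w T n := by
  unfold Em
  rw [← Complex.exp_add]
  congr 1
  push_cast
  ring

/-- demodulation -/
def Dm (w T : ℝ) (f : ℤ → ℂ) : ℤ → ℂ := fun k => f k * Em w T (-k)

theorem conv_mod (w T : ℝ) (F a : ℤ → ℂ) (k : ℤ) :
    conv F (fun m => a m * Complex.exp (-(Complex.I * (w : ℂ) * (m : ℂ) * (T : ℂ)))) k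
      = Em w T k * conv (Dm w T F) a k := by
  unfold conv
  rw [← tsum_mul_left]
  apply tsum_congr
  intro n
  have h : Em w T (k - n) = Em w T k * Em w T (-n) := by
    rw [sub_eq_add_neg, Em_add]
  show F n * (a (k - n) * Em w T (k - n)) = Em w T k * (Dm w T F n * a (k - n))
  rw [h]
  unfold Dm
  ring

theorem Dm_conv (w T : ℝ) (f g : ℤ → ℂ) :
    Dm w T (conv f g) = conv (Dm w T f) (Dm w T g) := by
  funext k
  unfold Dm conv
  rw [← tsum_mul_right]
  apply tsum_congr
  intro n
  have h : Em w T (-k) = Em w T (-n) * Em w T (-(k - n)) := by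
    rw [← Em_add]
    congr 1
    ring
  rw [h]; ring

theorem Dm_delta (w T : ℝ) : Dm w T delta = delta := by
  funext k
  unfold Dm delta
  by_cases h : k = 0 <;> simp [h, Em]

theorem Dm_convPow (w T : ℝ) (f : ℤ → ℂ) (N : ℕ) :
    Dm w T (convPow f N) = convPow (Dm w T f) N := by
  induction N with
  | zero => exact Dm_delta w T
  | succ n ih =>
    show Dm w T (conv f (convPow f n)) = conv (Dm w T f) (convPow (Dm w T f) n)
    rw [Dm_conv, ih]

theorem FS_Dm (w T : ℝ) {f : ℤ → ℂ} (hf : FS f) : FS (Dm w T f) := by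
  obtain ⟨s, hs⟩ := hf
  exact ⟨s, fun k hk => by unfold Dm; rw [hs k hk, zero_mul]⟩

theorem Dm_psi_self (w T : ℝ) : Dm w T (psi w T) = Delta := by
  funext k
  unfold Dm psi Delta
  by_cases h0 : k = 0
  · simp [h0, Em]
  · by_cases h1 : k = 1
    · simp only [h0, h1, if_false, if_true, if_neg (by norm_num : (1:ℤ) ≠ 0)]
      rw [Em, ← Complex.exp_add]
      rw [show -(Complex.I * (w:ℂ) * (T:ℂ)) + -(Complex.I * (w:ℂ) * ((-1:ℤ):ℂ) * (T:ℂ)) = 0 by push_cast; ring]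
      exact Complex.exp_zero
    · simp [h0, h1]



/-- The commutation identity: filtering a modulated sequence with `Ψ_{Ω_C}^N`
equals filtering the modulated `Δ^N`-differenced sequence with the reduced
filter `Ψ_{Ω_C^{[p]}}^N`. -/
theorem Psi_commutation {P : ℕ} (ω : Fin P → ℝ) (T : ℝ) (hT : 0 < T) (p : Fin P)
    (a : ℤ → ℂ) (N : ℕ) (hN : 1 ≤ N) (k : ℤ) :
    conv (convPow (PsiL (List.ofFn ω) T) N)
      (fun m : ℤ => a m * Complex.exp (-(Complex.I * (ω p : ℂ) * (m : ℂ) * (T : ℂ)))) k =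
    conv (convPow (PsiL ((List.ofFn ω).eraseIdx (p : ℕ)) T) N)
      (fun m : ℤ => conv (convPow Delta N) a m *
        Complex.exp (-(Complex.I * (ω p : ℂ) * (m : ℂ) * (T : ℂ)))) k := by
  rw [conv_mod (ω p) T _ a k, conv_mod (ω p) T _ (conv (convPow Delta N) a) k]
  congr 1
  rw [Dm_convPow, Dm_convPow]
  set Φ := Dm (ω p) T (PsiL ((List.ofFn ω).eraseIdx (p : ℕ)) T) with hΦdef
  have hΦ : FS Φ := FS_Dm _ _ (FS_PsiL _ _)
  have hplen : (p : ℕ) < (List.ofFn ω).length := by simp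
  have hget : (List.ofFn ω)[(p : ℕ)] = ω p := by simp
  have hextract : PsiL (List.ofFn ω) T
      = conv (psi (ω p) T) (PsiL ((List.ofFn ω).eraseIdx (p : ℕ)) T) := by
    rw [PsiL_extract T (List.ofFn ω) (p : ℕ) hplen, hget]
  rw [hextract, Dm_conv, Dm_psi_self, ← hΦdef,
    convPow_conv FS_Delta hΦ,
    conv_comm (convPow Delta N) (convPow Φ N),
    conv_assoc (FS_convPow hΦ N) (FS_convPow FS_Delta N) a]


end
end

section
/- Let ω_0, …, ω_{P−1} ∈ ℝ, T_S > 0, a_p = exp(−i ω_p T_S), and let Ψ_{Ω_C}^N be the N-fold convolution power of Ψ_{Ω_C} = ψ_0 ∗ ⋯ ∗ ψ_{P−1}. Then for every integer N ≥ 1 and every 0 ≤ k ≤ NP, Ψ_{Ω_C}^N[k] = (−1)^{NP−k} · ∑_{v ∈ 𝒱(N,k)} ∏_{i=0}^{N−1} e_{v_i}(a_0, …, a_{P−1}), where 𝒱(N,k) is the set of all vectors v ∈ ℕ^N of non-negative integers with ∑_{i} v_i = k, and e_j denotes the elementary symmetric polynomial of degree j (with e_j = 0 for j > P). -/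
noncomputable section

open scoped BigOperators

/-!
A sequence `ℤ → ℂ` supported on `ℕ` is the coefficient sequence of a polynomial, and convolution
of such sequences is multiplication of polynomials. Hence `Ψ^N` is the coefficient sequence of
`(∏ₚ (aₚ X - 1))^N`. The coefficient of `X^j` in `∏ₚ (aₚ X - 1)` is `(-1)^(P - j) eⱼ(a)`, and the
coefficient of `X^k` in an `N`-th power is the sum over compositions `v` of `k` of the products of
the coefficients at `v i`. The signs multiply to `(-1)^(NP - k)`, except when some `v i > P`, where
`e_{v i} = 0` kills the term anyway.
-/

open Polynomial Finset

def coeffSeq (p : ℂ[X]) : ℤ → ℂ := fun k => if 0 ≤ k then p.coeff k.toNat else 0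

@[simp]
theorem coeffSeq_natCast (p : ℂ[X]) (n : ℕ) : coeffSeq p n = p.coeff n := by
  simp [coeffSeq]

theorem coeffSeq_of_neg (p : ℂ[X]) {k : ℤ} (hk : k < 0) : coeffSeq p k = 0 :=
  if_neg hk.not_ge

theorem coeffSeq_mul_coeffSeq_sub_eq_zero (p q : ℂ[X]) {k n : ℤ} (h : n < 0 ∨ k < n) :
    coeffSeq p n * coeffSeq q (k - n) = 0 := by
  rcases h with h | h
  · rw [coeffSeq_of_neg p h, zero_mul]
  · rw [coeffSeq_of_neg q (by omega), mul_zero]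

theorem conv_coeffSeq (p q : ℂ[X]) : conv (coeffSeq p) (coeffSeq q) = coeffSeq (p * q) := by
  funext k
  rcases lt_or_ge k 0 with hk | hk
  · rw [coeffSeq_of_neg _ hk, conv]
    exact (tsum_congr fun n => coeffSeq_mul_coeffSeq_sub_eq_zero p q (by omega)).trans tsum_zero
  lift k to ℕ using hk
  rw [conv, tsum_eq_sum (s := (range (k + 1)).map Nat.castEmbedding), sum_map, coeffSeq_natCast,
    coeff_mul, Nat.sum_antidiagonal_eq_sum_range_succ_mk]
  · refine sum_congr rfl fun i hi => ?_
    rw [Nat.castEmbedding_apply, ← Nat.cast_sub (by simpa [Nat.lt_succ_iff] using hi),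
      coeffSeq_natCast, coeffSeq_natCast]
  · intro n hn
    refine coeffSeq_mul_coeffSeq_sub_eq_zero p q ?_
    by_contra! h
    lift n to ℕ using h.1
    exact hn (mem_map_of_mem _ (mem_range.mpr (by omega)))

theorem delta_eq_coeffSeq_one : delta = coeffSeq 1 := by
  funext k
  rcases lt_or_ge k 0 with hk | hk
  · rw [coeffSeq_of_neg _ hk, delta, if_neg hk.ne]
  lift k to ℕ using hk
  simp [delta, coeff_one]

theorem psi_eq_coeffSeq (w T : ℝ) :
    psi w T = coeffSeq (C (Complex.exp (-(Complex.I * w * T))) * X - 1) := by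
  funext k
  rcases lt_or_ge k 0 with hk | hk
  · rw [coeffSeq_of_neg _ hk, psi, if_neg hk.ne, if_neg (by omega)]
  lift k to ℕ using hk
  rw [coeffSeq_natCast, psi]
  rcases k with _ | _ | k
  · simp
  · simp [coeff_one]
  · rw [if_neg (by omega), if_neg (by omega)]
    simp [coeff_one]

theorem convPow_coeffSeq (p : ℂ[X]) (N : ℕ) : convPow (coeffSeq p) N = coeffSeq (p ^ N) := by
  induction N with
  | zero => exact delta_eq_coeffSeq_one
  | succ N ih => rw [convPow, ih, conv_coeffSeq, pow_succ']

theorem PsiL_eq_coeffSeq (ws : List ℝ) (T : ℝ) :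
    PsiL ws T =
      coeffSeq (ws.map fun w : ℝ => C (Complex.exp (-(Complex.I * w * T))) * X - 1).prod := by
  induction ws with
  | nil => exact delta_eq_coeffSeq_one
  | cons w ws ih =>
    rw [PsiL, List.map_cons, List.foldr_cons, ← PsiL, ih, psi_eq_coeffSeq, conv_coeffSeq,
      List.map_cons, List.prod_cons]

theorem coeff_pow_eq_sum_antidiagonalTuple {R : Type*} [CommSemiring R] (p : R[X]) (N k : ℕ) :
    (p ^ N).coeff k = ∑ v ∈ Nat.antidiagonalTuple N k, ∏ i, p.coeff (v i) := by
  classical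
  rw [← coeff_coe, Polynomial.coe_pow, ← Fin.prod_const, PowerSeries.coeff_prod, finsuppAntidiag,
    sum_map, ← piAntidiag_univ_fin_eq_antidiagonalTuple, ← sum_attach (piAntidiag univ k)]
  simp [coeff_coe]

theorem coeff_prod_C_mul_X_sub_one {R ι : Type*} [CommRing R] (s : Finset ι) (z : ι → R)
    (k : ℕ) :
    (∏ i ∈ s, (C (z i) * X - 1)).coeff k
      = (-1) ^ (#s - k) * ∑ S ∈ s.powersetCard k, ∏ i ∈ S, z i := by
  classical
  have expand : ∏ i ∈ s, (C (z i) * X - 1)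
      = ∑ t ∈ s.powerset, C ((-1) ^ (#s - #t) * ∏ i ∈ t, z i) * X ^ #t := by
    simp_rw [sub_eq_add_neg, prod_add]
    refine sum_congr rfl fun t ht => ?_
    rw [prod_mul_distrib, prod_const, prod_const, card_sdiff_of_subset (mem_powerset.mp ht),
      ← map_prod, C_mul, map_pow, map_neg, map_one]
    ring
  rw [expand, finsetSum_coeff, mul_sum, powersetCard_eq_filter, sum_filter]
  refine sum_congr rfl fun t _ => ?_
  rw [coeff_C_mul_X_pow]
  by_cases h : #t = k
  · simp [h]
  · simp [h, Ne.symm h]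

theorem esymmC_eq_zero_of_lt {P : ℕ} (z : Fin P → ℂ) {j : ℕ} (hj : P < j) : esymmC z j = 0 := by
  rw [esymmC, powersetCard_eq_empty.mpr (by simpa using hj), sum_empty]

theorem prod_neg_one_pow_tsub_mul {R : Type*} [CommRing R] {N P : ℕ} (v : Fin N → ℕ) (e : ℕ → R)
    (he : ∀ j, P < j → e j = 0) :
    ∏ i, (-1) ^ (P - v i) * e (v i) = (-1) ^ (N * P - ∑ i, v i) * ∏ i, e (v i) := by
  by_cases hv : ∃ i, P < v i
  · obtain ⟨i, hi⟩ := hv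
    rw [prod_eq_zero (mem_univ i) (by rw [he _ hi, mul_zero]),
      prod_eq_zero (mem_univ i) (he _ hi), mul_zero]
  push Not at hv
  rw [prod_mul_distrib, prod_pow_eq_pow_sum, sum_tsub_distrib _ fun i _ => hv i, sum_const,
    card_univ, Fintype.card_fin, smul_eq_mul]

theorem Psi_pow_taps_general {P : ℕ} (ω : Fin P → ℝ) (T : ℝ)
    (N : ℕ) (k : ℕ) :
    convPow (PsiL (List.ofFn ω) T) N (k : ℤ) =
      (-1) ^ (N * P - k) *
        ∑ v ∈ Finset.Nat.antidiagonalTuple N k, ∏ i : Fin N,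
          esymmC (fun p => Complex.exp (-(Complex.I * (ω p : ℂ) * (T : ℂ)))) (v i) := by
  rw [PsiL_eq_coeffSeq, List.map_ofFn, List.prod_ofFn, convPow_coeffSeq, coeffSeq_natCast,
    coeff_pow_eq_sum_antidiagonalTuple, mul_sum]
  refine sum_congr rfl fun v hv => ?_
  rw [← Nat.mem_antidiagonalTuple.mp hv,
    ← prod_neg_one_pow_tsub_mul v _ fun j => esymmC_eq_zero_of_lt _]
  refine prod_congr rfl fun i _ => ?_
  rw [Function.comp_def, coeff_prod_C_mul_X_sub_one, card_univ, Fintype.card_fin, esymmC]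

/-- The taps of the `N`-th power filter `Ψ_{Ω_C}^N` are signed sums over all
compositions `v ∈ 𝒱(N,k)` of products of elementary symmetric polynomials in
`a_p = exp(-i ω_p T)`. -/
theorem Psi_pow_taps {P : ℕ} (ω : Fin P → ℝ) (T : ℝ) (hT : 0 < T)
    (N : ℕ) (hN : 1 ≤ N) (k : ℕ) (hk : k ≤ N * P) :
    convPow (PsiL (List.ofFn ω) T) N (k : ℤ) =
      (-1) ^ (N * P - k) *
        ∑ v ∈ Finset.Nat.antidiagonalTuple N k, ∏ i : Fin N,
          esymmC (fun p => Complex.exp (-(Complex.I * (ω p : ℂ) * (T : ℂ)))) (v i) :=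
  Psi_pow_taps_general ω T N k
end
end

section
/- Let λ > 0 and let x, r, y : ℤ → ℂ be sequences with y[k] = x[k] − r[k] for all k. Let Ψ : ℤ → ℂ be supported on {0, …, L} with Ψ[0] = 1, and suppose: (i) r[k] = 0 for all k₀ − L ≤ k < k₀; (ii) Re r[k₀] ∈ 2λℤ and Im r[k₀] ∈ 2λℤ; (iii) the real and imaginary parts of (Ψ ∗ x)[k₀] both lie in [−λ, λ). Then M_λ((Ψ ∗ y)[k₀]) = (Ψ ∗ x)[k₀], and consequently r[k₀] = M_λ((Ψ ∗ y)[k₀]) − (Ψ ∗ y)[k₀]. (The core modulo-unfolding step of the recovery algorithm in Theorem 1.) -/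
noncomputable section

open scoped BigOperators

/-!
Since `Ψ` is supported on `{0, …, L}` with `Ψ 0 = 1` and `r` vanishes on the `L` samples
before `k₀`, the convolution `(Ψ ∗ r)[k₀]` reduces to `r[k₀]`, so
`(Ψ ∗ y)[k₀] = (Ψ ∗ x)[k₀] - r[k₀]`. The shift `r[k₀]` lies in the lattice `2λ(ℤ + iℤ)`, which
`M_λ` ignores, and `M_λ` fixes `(Ψ ∗ x)[k₀]`, which already lies in `[-λ, λ) + i[-λ, λ)`.
-/

lemma mod1_of_mem {lam t : ℝ} (h : t ∈ Set.Ico (-lam) lam) : mod1 lam t = t := by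
  have hlam : 0 < 2 * lam := by linarith [h.1, h.2]
  have hfloor : ⌊(t + lam) / (2 * lam)⌋ = 0 := Int.floor_eq_zero_iff.mpr
    ⟨div_nonneg (by linarith [h.1]) hlam.le, (div_lt_one hlam).mpr (by linarith [h.2])⟩
  simp [mod1, hfloor]

lemma mod1_sub_two_mul_int (lam t : ℝ) (m : ℤ) : mod1 lam (t - 2 * lam * m) = mod1 lam t := by
  rcases eq_or_ne lam 0 with rfl | hlam
  · simp [mod1]
  have hshift : (t - 2 * lam * m + lam) / (2 * lam) = (t + lam) / (2 * lam) + (-m : ℤ) := by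
    field_simp
    push_cast
    ring
  simp only [mod1, hshift, Int.floor_add_intCast]
  push_cast
  ring

lemma cmod_of_mem {lam : ℝ} {z : ℂ} (hre : z.re ∈ Set.Ico (-lam) lam)
    (him : z.im ∈ Set.Ico (-lam) lam) : cmod lam z = z := by
  rw [cmod, mod1_of_mem hre, mod1_of_mem him, Complex.re_add_im]

lemma cmod_sub_lattice (lam : ℝ) (z : ℂ) (m n : ℤ) :
    cmod lam (z - ((2 * lam * m : ℝ) + Complex.I * ((2 * lam * n : ℝ) : ℂ))) = cmod lam z := by
  have hre : (z - ((2 * lam * m : ℝ) + Complex.I * ((2 * lam * n : ℝ) : ℂ))).re =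
      z.re - 2 * lam * m := by simp
  have him : (z - ((2 * lam * m : ℝ) + Complex.I * ((2 * lam * n : ℝ) : ℂ))).im =
      z.im - 2 * lam * n := by simp
  rw [cmod, cmod, hre, him, mod1_sub_two_mul_int, mod1_sub_two_mul_int]

lemma summable_mul_of_support_Icc {Ψ : ℤ → ℂ} {L : ℕ}
    (hsupp : ∀ k : ℤ, k < 0 ∨ (L : ℤ) < k → Ψ k = 0) (f : ℤ → ℂ) (k : ℤ) :
    Summable fun n : ℤ => Ψ n * f (k - n) := by
  refine summable_of_ne_finset_zero (s := Finset.Icc 0 (L : ℤ)) fun n hn => ?_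
  rw [hsupp n (by rw [Finset.mem_Icc] at hn; omega), zero_mul]

lemma conv_sub_right_of_support_Icc {Ψ : ℤ → ℂ} {L : ℕ}
    (hsupp : ∀ k : ℤ, k < 0 ∨ (L : ℤ) < k → Ψ k = 0) (a b : ℤ → ℂ) (k : ℤ) :
    conv Ψ (a - b) k = conv Ψ a k - conv Ψ b k := by
  simp only [conv, Pi.sub_apply, mul_sub]
  exact (summable_mul_of_support_Icc hsupp a k).tsum_sub (summable_mul_of_support_Icc hsupp b k)

lemma conv_apply_eq_of_support_Icc {Ψ : ℤ → ℂ} {L : ℕ}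
    (hsupp : ∀ k : ℤ, k < 0 ∨ (L : ℤ) < k → Ψ k = 0) (hΨ0 : Ψ 0 = 1) {r : ℤ → ℂ} {k₀ : ℤ}
    (hr : ∀ k : ℤ, k₀ - L ≤ k → k < k₀ → r k = 0) :
    conv Ψ r k₀ = r k₀ := by
  rw [conv, tsum_eq_single 0 fun n hn => ?_, hΨ0, one_mul, sub_zero]
  rcases lt_or_ge n 0 with hneg | hnonneg
  · rw [hsupp n (Or.inl hneg), zero_mul]
  rcases le_or_gt n L with hle | hgt
  · rw [hr (k₀ - n) (by omega) (by omega), mul_zero]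
  · rw [hsupp n (Or.inr hgt), zero_mul]

theorem modulo_unfolding_step_general (lam : ℝ) (x r y : ℤ → ℂ)
    (hy : ∀ k : ℤ, y k = x k - r k)
    (Ψ : ℤ → ℂ) (L : ℕ)
    (hsupp : ∀ k : ℤ, k < 0 ∨ (L : ℤ) < k → Ψ k = 0)
    (hΨ0 : Ψ 0 = 1) (k₀ : ℤ)
    (h1 : ∀ k : ℤ, k₀ - L ≤ k → k < k₀ → r k = 0)
    (h2 : ∃ m n : ℤ, r k₀ = (2 * lam * m : ℝ) + Complex.I * ((2 * lam * n : ℝ) : ℂ))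
    (h3re : (conv Ψ x k₀).re ∈ Set.Ico (-lam) lam)
    (h3im : (conv Ψ x k₀).im ∈ Set.Ico (-lam) lam) :
    cmod lam (conv Ψ y k₀) = conv Ψ x k₀ ∧
    r k₀ = cmod lam (conv Ψ y k₀) - conv Ψ y k₀ := by
  obtain ⟨m, n, hr⟩ := h2
  have hconv : conv Ψ y k₀ = conv Ψ x k₀ - r k₀ := by
    rw [show y = x - r from funext hy, conv_sub_right_of_support_Icc hsupp,
      conv_apply_eq_of_support_Icc hsupp hΨ0 h1]
  have hcmod : cmod lam (conv Ψ y k₀) = conv Ψ x k₀ := by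
    rw [hconv, hr, cmod_sub_lattice, cmod_of_mem h3re h3im]
  exact ⟨hcmod, by rw [hcmod, hconv]; ring⟩

/-- The core modulo-unfolding step of the recovery algorithm in Theorem 1. -/
theorem modulo_unfolding_step (lam : ℝ) (hlam : 0 < lam) (x r y : ℤ → ℂ)
    (hy : ∀ k : ℤ, y k = x k - r k)
    (Ψ : ℤ → ℂ) (L : ℕ)
    (hsupp : ∀ k : ℤ, k < 0 ∨ (L : ℤ) < k → Ψ k = 0)
    (hΨ0 : Ψ 0 = 1) (k₀ : ℤ)
    (h1 : ∀ k : ℤ, k₀ - L ≤ k → k < k₀ → r k = 0)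
    (h2 : ∃ m n : ℤ, r k₀ = (2 * lam * m : ℝ) + Complex.I * ((2 * lam * n : ℝ) : ℂ))
    (h3re : (conv Ψ x k₀).re ∈ Set.Ico (-lam) lam)
    (h3im : (conv Ψ x k₀).im ∈ Set.Ico (-lam) lam) :
    cmod lam (conv Ψ y k₀) = conv Ψ x k₀ ∧
    r k₀ = cmod lam (conv Ψ y k₀) - conv Ψ y k₀ :=
  modulo_unfolding_step_general lam x r y hy Ψ L hsupp hΨ0 k₀ h1 h2 h3re h3im

end
end
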